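/- Core of the main Theorem 2 (Lemma 4.5 of the paper, 'S-matrix'): the S-matrix of the quantum PSU(3) representation of SL(2,ℤ) is proportional to that of the quantum PSU(2) representation at ξ = ζ⁴. Precisely, there exists a constant c ∈ ℂ such that for all a, b ∈ ZMod r: s(a·b) = c · χ(a·b) · (ζ^{2·a·b} − ζ^{−2·a·b}). (Since moreover the diagonal T-matrices of the two representations coincide entrywise, the PSU(2) representation of SL(2,ℤ) is a direct summand of the PSU(3) representation.) -/

import Mathlib

open Complex Finset

open scoped Classical

/-- For `n ∈ ZMod r`, the complex number `ζ^n = exp(2πi·n̂/r)` where `n̂` is the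
canonical lift of `n`. -/
noncomputable def zmodExp (r : ℕ) (n : ZMod r) : ℂ :=
  Complex.exp (2 * Real.pi * Complex.I * (n.val : ℂ) / (r : ℂ))

/-- The alternating sum `s(m) = ∑_{j=0}^{r} (−1)^j·ζ^{m·Tr(u^j)}`. -/
noncomputable def sSum (r : ℕ) {F : Type*} [Field F] [Fintype F] [Algebra (ZMod r) F]
    (u : F) (m : ZMod r) : ℂ :=
  ∑ j ∈ Finset.range (r + 1), (-1 : ℂ) ^ j * zmodExp r (m * Algebra.trace (ZMod r) F (u ^ j))

/-- The quadratic character of `ZMod r` with values in `ℂ`: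
`χ(m) = 1` if `m` is a nonzero square, `−1` if `m` is a nonsquare, `χ(0) = 0`. -/
noncomputable def chiC (r : ℕ) (m : ZMod r) : ℂ :=
  if m = 0 then 0 else if IsSquare m then 1 else -1

/-!
Write `v = u ^ j`. These are the elements of norm one, `v ^ (r + 1) = 1`, on which Frobenius acts
as inversion, so `Tr v = v + v⁻¹`; moreover `(-1) ^ j = v ^ ((r + 1) / 2)` since
`u ^ ((r + 1) / 2) = -1`. Grouping `s(m)` by `t = Tr v`, the signed number of such `v` with
`v + v⁻¹ = t` is `χ(t + 2) - χ(t - 2)`: Euler's criterion applied to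
`t ± 2 = v⁻¹ (v ± 1) ^ 2` gives the sign of `v`, and applied to the discriminant `t ^ 2 - 4` it
decides whether the fibre is empty or a pair `{v, v⁻¹}`. Shifting `t` by `±2` then gives
`s(m) = (ζ^{-2m} - ζ^{2m}) · χ(m) · g` with `g` the quadratic Gauss sum, so `c = -g`.
-/

theorem pow_eq_inv_of_pow_succ_eq_one {M : Type*} [DivisionMonoid M] {v : M} {n : ℕ}
    (h : v ^ (n + 1) = 1) : v ^ n = v⁻¹ :=
  eq_inv_of_mul_eq_one_left (by rwa [← pow_succ])

theorem eq_or_eq_inv_of_add_inv_eq {K : Type*} [Field K] {x v : K} (hx : x ≠ 0) (hv : v ≠ 0)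
    (h : x + x⁻¹ = v + v⁻¹) : x = v ∨ x = v⁻¹ := by
  have hfac : (x - v) * (x - v⁻¹) = 0 := by
    linear_combination x * h - mul_inv_cancel₀ hx + mul_inv_cancel₀ hv
  exact (mul_eq_zero.mp hfac).imp sub_eq_zero.mp sub_eq_zero.mp

theorem eq_inv_iff_add_inv_eq_two_or_neg_two {K : Type*} [Field K] {v : K} (hv : v ≠ 0) :
    v = v⁻¹ ↔ v + v⁻¹ = 2 ∨ v + v⁻¹ = -2 := by
  constructor
  · intro h
    have hsq : v ^ 2 = 1 := by rw [sq]; nth_rewrite 2 [h]; exact mul_inv_cancel₀ hv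
    rcases sq_eq_one_iff.mp hsq with rfl | rfl <;> norm_num
  · rintro (h | h)
    · rcases eq_or_eq_inv_of_add_inv_eq hv one_ne_zero (by rw [h]; norm_num) with rfl | rfl <;>
        simp
    · rcases eq_or_eq_inv_of_add_inv_eq hv (neg_ne_zero.mpr one_ne_zero)
        (by rw [h]; norm_num) with rfl | rfl <;> simp

theorem IsPrimitiveRoot.pow_eq_neg_one_of_two_mul {R : Type*} [CommRing R] [IsDomain R] {ζ : R}
    {n : ℕ} (h : IsPrimitiveRoot ζ (2 * n)) (hn : n ≠ 0) : ζ ^ n = -1 := by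
  have := h.pow_of_dvd hn (dvd_mul_left n 2)
  rw [Nat.mul_div_cancel _ (Nat.pos_of_ne_zero hn)] at this
  exact this.eq_neg_one_of_two_right

/-- Frobenius inverts `v`, so `(v + ε) ^ (p - 1) = ε v⁻¹`; raise
`v + v⁻¹ + 2ε = v⁻¹ (v + ε) ^ 2` to the power `(p - 1) / 2`. -/
theorem add_inv_add_two_mul_pow_half {p : ℕ} [Fact p.Prime] {K : Type*} [Field K] [CharP K p]
    (hp : p ≠ 2) {v ε : K} (hv : v ^ (p + 1) = 1) (hε : ε ^ 2 = 1) (hvε : v ≠ -ε) :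
    (v + v⁻¹ + 2 * ε) ^ (p / 2) = ε * v ^ (p / 2 + 1) := by
  obtain ⟨k, rfl⟩ := (Fact.out : p.Prime).odd_of_ne_two hp
  rw [show (2 * k + 1) / 2 = k by omega]
  have hvv : v * v⁻¹ = 1 := mul_inv_cancel₀ (by rintro rfl; simp at hv)
  have hεp : ε ^ (2 * k + 1) = ε := by rw [pow_succ, pow_mul, hε, one_pow, one_mul]
  have hfrob : (v + ε) ^ (2 * k) * (v + ε) = ε * v⁻¹ * (v + ε) := by
    rw [← pow_succ, add_pow_char, hεp, pow_eq_inv_of_pow_succ_eq_one hv]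
    linear_combination (-ε) * hvv - v⁻¹ * hε
  have hx : (v + ε) ^ (2 * k) = ε * v⁻¹ :=
    mul_right_cancel₀ (fun h => hvε (eq_neg_of_add_eq_zero_left h)) hfrob
  have hvk : v⁻¹ ^ (k + 1) = v ^ (k + 1) := by
    rw [inv_pow, inv_eq_of_mul_eq_one_left]
    rw [← pow_add, show k + 1 + (k + 1) = 2 * k + 1 + 1 by ring, hv]
  calc (v + v⁻¹ + 2 * ε) ^ k = (v⁻¹ * (v + ε) ^ 2) ^ k := by
        congr 1; linear_combination (-(v + 2 * ε)) * hvv - v⁻¹ * hε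
    _ = ε * v⁻¹ ^ (k + 1) := by rw [mul_pow, ← pow_mul, hx]; ring
    _ = ε * v ^ (k + 1) := by rw [hvk]

theorem sum_comp_add_mul_addChar {R R' : Type*} [AddCommGroup R] [Fintype R] [CommRing R']
    (φ : AddChar R R') (f : R → R') (a : R) :
    ∑ t, f (t + a) * φ t = φ (-a) * ∑ t, f t * φ t := by
  rw [Finset.mul_sum]
  refine Fintype.sum_equiv (Equiv.addRight a) _ _ fun t => ?_
  have hφ : φ (-a) * φ a = 1 := by
    rw [← AddChar.map_add_eq_mul, neg_add_cancel, AddChar.map_zero_eq_one]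
  simp only [Equiv.coe_addRight, AddChar.map_add_eq_mul]
  linear_combination (-(f (t + a) * φ t)) * hφ

theorem zmodExp_eq_stdAddChar {r : ℕ} [NeZero r] : zmodExp r = ZMod.stdAddChar := by
  funext n
  rw [ZMod.stdAddChar_apply, ZMod.toCircle_apply, zmodExp]

section QuadraticCharacter

variable {p : ℕ}

theorem chiC_zero : chiC p 0 = 0 := if_pos rfl

theorem chiC_eq_of_chiC_mul_eq_one {a b : ZMod p} (h : chiC p a * chiC p b = 1) :
    chiC p a = chiC p b := by
  unfold chiC at *
  split_ifs at * <;> norm_num at *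

variable [Fact p.Prime]

noncomputable def quadraticCharComplex (p : ℕ) [Fact p.Prime] : MulChar (ZMod p) ℂ :=
  (quadraticChar (ZMod p)).ringHomComp (Int.castRingHom ℂ)

theorem chiC_eq_quadraticCharComplex : chiC p = quadraticCharComplex p := by
  funext m
  simp only [chiC, quadraticCharComplex, MulChar.ringHomComp_apply, quadraticChar_apply,
    quadraticCharFun]
  split_ifs <;> simp

theorem chiC_mul (a b : ZMod p) : chiC p (a * b) = chiC p a * chiC p b := by
  simp only [chiC_eq_quadraticCharComplex, map_mul]

theorem chiC_eq_neg_one_pow (hp : p ≠ 2) {a : ZMod p} {j : ℕ} (h : a ^ (p / 2) = (-1) ^ j) :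
    chiC p a = (-1) ^ j := by
  have ha : a ≠ 0 := by
    rintro rfl
    have : p / 2 ≠ 0 := by have := (Fact.out : p.Prime).two_le; omega
    rw [zero_pow this] at h
    exact pow_ne_zero j (neg_ne_zero.mpr one_ne_zero) h.symm
  rw [chiC, if_neg ha]
  rcases Nat.even_or_odd j with hj | hj
  · rw [hj.neg_one_pow] at h ⊢
    rw [if_pos ((ZMod.euler_criterion p ha).mpr h)]
  · rw [hj.neg_one_pow] at h ⊢
    have hne : (-1 : ZMod p) ≠ 1 :=
      Ring.neg_one_ne_one_of_char_ne_two (by rwa [ZMod.ringChar_zmod_n])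
    rw [if_neg fun hsq => hne (h ▸ (ZMod.euler_criterion p ha).mp hsq)]

theorem gaussSum_quadraticCharComplex_mulShift (ψ : AddChar (ZMod p) ℂ) {m : ZMod p}
    (hm : m ≠ 0) :
    gaussSum (quadraticCharComplex p) (ψ.mulShift m) =
      chiC p m * gaussSum (quadraticCharComplex p) ψ := by
  have hquad : (quadraticCharComplex p).IsQuadratic :=
    (quadraticChar_isQuadratic (ZMod p)).comp _
  rw [← Units.val_mk0 hm, gaussSum_mulShift_eq, hquad.inv, chiC_eq_quadraticCharComplex]

theorem sum_chiC_sub_mul_zmodExp (m : ZMod p) :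
    ∑ t, (chiC p (t + 2) - chiC p (t - 2)) * zmodExp p (m * t) =
      (zmodExp p (-(2 * m)) - zmodExp p (2 * m)) *
        gaussSum (quadraticCharComplex p) (ZMod.stdAddChar.mulShift m) := by
  set φ := (ZMod.stdAddChar (N := p)).mulShift m
  have hφ (x : ZMod p) : zmodExp p (m * x) = φ x := by
    rw [zmodExp_eq_stdAddChar, AddChar.mulShift_apply]
  simp_rw [sub_eq_add_neg _ (2 : ZMod p), hφ, sub_mul, Finset.sum_sub_distrib,
    sum_comp_add_mul_addChar φ (chiC p), chiC_eq_quadraticCharComplex, gaussSum]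
  rw [← hφ, ← hφ]
  ring_nf

end QuadraticCharacter

section NormOne

variable {p : ℕ} [Fact p.Prime] {F : Type*} [Field F] [Algebra (ZMod p) F]

theorem algebraMap_zmod_pow_char (a : ZMod p) :
    algebraMap (ZMod p) F a ^ p = algebraMap (ZMod p) F a := by
  rw [← map_pow, ZMod.pow_card]

theorem chiC_add_two_mul_neg_one_pow (hp : p ≠ 2) {u : F} (hu : IsPrimitiveRoot u (p + 1))
    {t : ZMod p} {i j : ℕ} (hj : u ^ j + (u ^ j)⁻¹ = algebraMap (ZMod p) F t)
    (ht : t + 2 * (-1) ^ i ≠ 0) :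
    chiC p (t + 2 * (-1) ^ i) = (-1) ^ (i + j) := by
  have : CharP F p := charP_of_injective_algebraMap (algebraMap (ZMod p) F).injective p
  have hv : (u ^ j) ^ (p + 1) = 1 := by rw [← pow_mul, mul_comm, pow_mul, hu.pow_eq_one, one_pow]
  have hε : ((-1 : F) ^ i) ^ 2 = 1 := by rw [← pow_mul, mul_comm, pow_mul]; simp
  have hvε : u ^ j ≠ -(-1) ^ i := by
    intro h
    refine ht ((algebraMap (ZMod p) F).injective ?_)
    rw [map_add, ← hj, h, map_zero, map_mul, map_pow, map_neg, map_one, map_ofNat, inv_neg,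
      ← inv_pow, inv_neg_one]
    ring
  have hhalf : u ^ (p / 2 + 1) = -1 := by
    obtain ⟨k, hk⟩ := (Fact.out : p.Prime).odd_of_ne_two hp
    refine IsPrimitiveRoot.pow_eq_neg_one_of_two_mul ?_ (Nat.succ_ne_zero _)
    rwa [show 2 * (p / 2 + 1) = p + 1 by omega]
  apply chiC_eq_neg_one_pow hp
  apply (algebraMap (ZMod p) F).injective
  rw [map_pow, map_add, ← hj, map_mul, map_pow, map_neg, map_one, map_ofNat,
    add_inv_add_two_mul_pow_half hp hv hε hvε, ← pow_mul, mul_comm j, pow_mul, hhalf]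
  simp [pow_add]

end NormOne

section QuadraticExtension

variable {p : ℕ} [Fact p.Prime] {F : Type*} [Field F] [Fintype F] [Algebra (ZMod p) F]

theorem finrank_zmod_eq_two (hcard : Fintype.card F = p ^ 2) :
    Module.finrank (ZMod p) F = 2 := by
  have h := Module.card_eq_pow_finrank (K := ZMod p) (V := F)
  rw [ZMod.card, hcard] at h
  exact Nat.pow_right_injective (Fact.out : p.Prime).two_le h.symm

theorem algebraMap_trace_eq_add_pow (hcard : Fintype.card F = p ^ 2) (x : F) :
    algebraMap (ZMod p) F (Algebra.trace (ZMod p) F x) = x + x ^ p := by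
  rw [FiniteField.algebraMap_trace_eq_sum_pow, finrank_zmod_eq_two hcard, Nat.card_zmod]
  simp [Finset.sum_range_succ]

theorem isSquare_algebraMap_zmod (hcard : Fintype.card F = p ^ 2) (hp : p ≠ 2) (a : ZMod p) :
    IsSquare (algebraMap (ZMod p) F a) := by
  rcases eq_or_ne a 0 with rfl | ha
  · simp
  have : CharP F p := charP_of_injective_algebraMap (algebraMap (ZMod p) F).injective p
  obtain ⟨k, hk⟩ := (Fact.out : p.Prime).odd_of_ne_two hp
  have hhalf : Fintype.card F / 2 = (p - 1) * (k + 1) := by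
    rw [hcard, hk, show (2 * k + 1) ^ 2 = 2 * (2 * k * (k + 1)) + 1 by ring, Nat.add_sub_cancel]
    omega
  rw [FiniteField.isSquare_iff (by rwa [ringChar.eq F p]) (by simpa using ha), hhalf, pow_mul,
    ← map_pow, ZMod.pow_card_sub_one_eq_one ha, map_one, one_pow]

/-- A square root `e` of the discriminant `t ^ 2 - 4` satisfies `e ^ p = -e`, so Frobenius swaps
the two roots `(t ± e) / 2` of `X ^ 2 - t X + 1`. -/
theorem exists_pow_succ_eq_one_add_inv_eq (hcard : Fintype.card F = p ^ 2) (hp : p ≠ 2)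
    {t : ZMod p} (ht : (t ^ 2 - 4) ^ (p / 2) ≠ 1) :
    ∃ v : F, v ^ (p + 1) = 1 ∧ v + v⁻¹ = algebraMap (ZMod p) F t := by
  have : CharP F p := charP_of_injective_algebraMap (algebraMap (ZMod p) F).injective p
  set ι := algebraMap (ZMod p) F
  obtain ⟨e, he⟩ := isSquare_algebraMap_zmod hcard hp (t ^ 2 - 4)
  have h2 : (2 : F) ≠ 0 := Ring.two_ne_zero (by rwa [ringChar.eq F p])
  have hep : e ^ p = -e := by
    obtain ⟨k, hk⟩ := (Fact.out : p.Prime).odd_of_ne_two hp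
    rcases eq_or_ne (t ^ 2 - 4) 0 with h0 | h0
    · rw [h0, map_zero] at he
      rw [mul_self_eq_zero.mp he.symm, neg_zero, zero_pow (by omega)]
    · have hneg := (ZMod.pow_div_two_eq_neg_one_or_one p h0).resolve_left ht
      rw [show p / 2 = k by omega] at hneg
      rw [hk, pow_succ, pow_mul, sq, ← he, ← map_pow, hneg, map_neg, map_one, neg_one_mul]
  have hdisc : (ι t + e) * (ι t - e) = 4 := by
    have : ι (t ^ 2 - 4) = ι t ^ 2 - 4 := by rw [map_sub, map_pow, map_ofNat]
    linear_combination he - this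
  have hfrob : ((ι t + e) / 2) ^ p = (ι t - e) / 2 := by
    rw [div_pow, add_pow_char, algebraMap_zmod_pow_char, hep, ← sub_eq_add_neg,
      ← map_ofNat ι 2, algebraMap_zmod_pow_char]
  have hmul : (ι t + e) / 2 * ((ι t - e) / 2) = 1 := by
    field_simp
    linear_combination hdisc
  refine ⟨(ι t + e) / 2, by rw [pow_succ', hfrob, hmul], ?_⟩
  rw [inv_eq_of_mul_eq_one_right hmul]
  field_simp
  ring

end QuadraticExtension

section TraceFiber

variable {p : ℕ} [Fact p.Prime] {F : Type*} [Field F] [Fintype F] [Algebra (ZMod p) F] {u : F}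

noncomputable def traceFiber (u : F) (t : ZMod p) : Finset ℕ :=
  {j ∈ Finset.range (p + 1) | Algebra.trace (ZMod p) F (u ^ j) = t}

theorem mem_traceFiber (hcard : Fintype.card F = p ^ 2) (hu : IsPrimitiveRoot u (p + 1))
    {t : ZMod p} {j : ℕ} :
    j ∈ traceFiber u t ↔ j < p + 1 ∧ u ^ j + (u ^ j)⁻¹ = algebraMap (ZMod p) F t := by
  have hj : (u ^ j) ^ (p + 1) = 1 := by rw [← pow_mul, mul_comm, pow_mul, hu.pow_eq_one, one_pow]
  rw [traceFiber, Finset.mem_filter, Finset.mem_range,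
    ← (algebraMap (ZMod p) F).injective.eq_iff, algebraMap_trace_eq_add_pow hcard,
    pow_eq_inv_of_pow_succ_eq_one hj]

theorem chiC_add_two_of_mem_traceFiber (hcard : Fintype.card F = p ^ 2) (hp : p ≠ 2)
    (hu : IsPrimitiveRoot u (p + 1)) {t : ZMod p} {j : ℕ} (hj : j ∈ traceFiber u t)
    (ht : t ≠ -2) : chiC p (t + 2) = (-1) ^ j := by
  simpa using chiC_add_two_mul_neg_one_pow hp hu (i := 0) ((mem_traceFiber hcard hu).mp hj).2
    (by simpa [add_eq_zero_iff_eq_neg] using ht)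

theorem chiC_sub_two_of_mem_traceFiber (hcard : Fintype.card F = p ^ 2) (hp : p ≠ 2)
    (hu : IsPrimitiveRoot u (p + 1)) {t : ZMod p} {j : ℕ} (hj : j ∈ traceFiber u t)
    (ht : t ≠ 2) : chiC p (t - 2) = -(-1) ^ j := by
  simpa [← sub_eq_add_neg, pow_add] using chiC_add_two_mul_neg_one_pow hp hu (i := 1)
    ((mem_traceFiber hcard hu).mp hj).2 (by simpa [add_neg_eq_zero] using ht)

theorem chiC_add_two_eq_chiC_sub_two_of_traceFiber_eq_empty (hcard : Fintype.card F = p ^ 2)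
    (hp : p ≠ 2) (hu : IsPrimitiveRoot u (p + 1)) {t : ZMod p} (hempty : traceFiber u t = ∅) :
    chiC p (t + 2) = chiC p (t - 2) := by
  have hd : (t ^ 2 - 4) ^ (p / 2) = (-1) ^ 0 := by
    by_contra hd
    obtain ⟨v, hv, hvt⟩ := exists_pow_succ_eq_one_add_inv_eq hcard hp (by simpa using hd)
    obtain ⟨j, hj, rfl⟩ := hu.eq_pow_of_pow_eq_one hv
    exact Finset.notMem_empty j (hempty ▸ (mem_traceFiber hcard hu).mpr ⟨hj, hvt⟩)
  have hprod := chiC_eq_neg_one_pow hp hd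
  rw [show t ^ 2 - 4 = (t + 2) * (t - 2) by ring, chiC_mul, pow_zero] at hprod
  exact chiC_eq_of_chiC_mul_eq_one hprod

theorem traceFiber_eq_pair (hcard : Fintype.card F = p ^ 2) (hu : IsPrimitiveRoot u (p + 1))
    {t : ZMod p} {j₀ : ℕ} (hj₀ : j₀ ∈ traceFiber u t) :
    ∃ j₁, (j₀ = j₁ ↔ t = 2 ∨ t = -2) ∧ traceFiber u t = {j₀, j₁} := by
  set ι := algebraMap (ZMod p) F
  obtain ⟨hj₀lt, hj₀t⟩ := (mem_traceFiber hcard hu).mp hj₀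
  have hu0 (j : ℕ) : u ^ j ≠ 0 := pow_ne_zero _ (hu.ne_zero (Nat.succ_ne_zero p))
  obtain ⟨j₁, hj₁lt, hj₁⟩ := hu.eq_pow_of_pow_eq_one (ξ := (u ^ j₀)⁻¹) <| by
    rw [inv_pow, ← pow_mul, mul_comm, pow_mul, hu.pow_eq_one, one_pow, inv_one]
  refine ⟨j₁, ?_, Finset.ext fun j => ?_⟩
  · calc j₀ = j₁ ↔ u ^ j₀ = u ^ j₁ := ⟨fun h => h ▸ rfl, hu.pow_inj hj₀lt hj₁lt⟩
      _ ↔ ι t = 2 ∨ ι t = -2 := by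
        rw [hj₁, eq_inv_iff_add_inv_eq_two_or_neg_two (hu0 j₀), hj₀t]
      _ ↔ t = 2 ∨ t = -2 := by
        rw [← map_ofNat ι 2, ← map_neg, ι.injective.eq_iff, ι.injective.eq_iff]
  rw [mem_traceFiber hcard hu, Finset.mem_insert, Finset.mem_singleton]
  constructor
  · rintro ⟨hj, hjt⟩
    rcases eq_or_eq_inv_of_add_inv_eq (hu0 j) (hu0 j₀) (hjt.trans hj₀t.symm) with h | h
    · exact Or.inl (hu.pow_inj hj hj₀lt h)
    · exact Or.inr (hu.pow_inj hj hj₁lt (h.trans hj₁.symm))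
  · rintro (rfl | rfl)
    · exact ⟨hj₀lt, hj₀t⟩
    · refine ⟨hj₁lt, ?_⟩
      rw [hj₁, inv_inv, add_comm]
      exact hj₀t

theorem sum_neg_one_pow_traceFiber (hcard : Fintype.card F = p ^ 2) (hp : p ≠ 2)
    (hu : IsPrimitiveRoot u (p + 1)) (t : ZMod p) :
    ∑ j ∈ traceFiber u t, (-1 : ℂ) ^ j = chiC p (t + 2) - chiC p (t - 2) := by
  rcases (traceFiber u t).eq_empty_or_nonempty with hempty | ⟨j₀, hj₀⟩
  · rw [hempty, Finset.sum_empty,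
      chiC_add_two_eq_chiC_sub_two_of_traceFiber_eq_empty hcard hp hu hempty, sub_self]
  obtain ⟨j₁, hpair, hfib⟩ := traceFiber_eq_pair hcard hu hj₀
  have hj₁ : j₁ ∈ traceFiber u t :=
    hfib ▸ Finset.mem_insert_of_mem (Finset.mem_singleton_self _)
  have hchar : ringChar (ZMod p) ≠ 2 := by rwa [ZMod.ringChar_zmod_n]
  have h2 : (2 : ZMod p) ≠ -2 := fun h =>
    Ring.two_ne_zero hchar ((Ring.eq_self_iff_eq_zero_of_char_ne_two hchar).mp h.symm)
  rw [hfib]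
  by_cases h : j₀ = j₁
  · rw [← h, Finset.pair_eq_singleton, Finset.sum_singleton]
    rcases hpair.mp h with rfl | rfl
    · rw [sub_self, chiC_zero, sub_zero, chiC_add_two_of_mem_traceFiber hcard hp hu hj₀ h2]
    · rw [neg_add_cancel, chiC_zero, zero_sub,
        chiC_sub_two_of_mem_traceFiber hcard hp hu hj₀ h2.symm, neg_neg]
  · obtain ⟨ht2, htm2⟩ := not_or.mp (hpair.not.mp h)
    rw [Finset.sum_pair h, chiC_add_two_of_mem_traceFiber hcard hp hu hj₀ htm2,
      chiC_sub_two_of_mem_traceFiber hcard hp hu hj₁ ht2, sub_neg_eq_add]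

theorem sSum_eq_sum_chiC_mul_zmodExp (hcard : Fintype.card F = p ^ 2) (hp : p ≠ 2)
    (hu : IsPrimitiveRoot u (p + 1)) (m : ZMod p) :
    sSum p u m = ∑ t, (chiC p (t + 2) - chiC p (t - 2)) * zmodExp p (m * t) := by
  rw [sSum, ← Finset.sum_fiberwise _ fun j => Algebra.trace (ZMod p) F (u ^ j)]
  refine Finset.sum_congr rfl fun t _ => ?_
  rw [← sum_neg_one_pow_traceFiber hcard hp hu t, Finset.sum_mul]
  refine Finset.sum_congr rfl fun j hj => ?_
  rw [(Finset.mem_filter.mp hj).2]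

end TraceFiber

theorem stmt18_general (r : ℕ) (hr : r.Prime) (hodd : Odd r)
    (F : Type*) [Field F] [Fintype F] [Algebra (ZMod r) F]
    (hcard : Fintype.card F = r ^ 2)
    (u : F) (hu : orderOf u = r + 1) :
    ∃ c : ℂ, ∀ a b : ZMod r,
      sSum r u (a * b) =
        c * chiC r (a * b) * (zmodExp r (2 * a * b) - zmodExp r (-(2 * a * b))) := by
  have := Fact.mk hr
  have hr2 : r ≠ 2 := by rintro rfl; norm_num at hodd
  have hprim : IsPrimitiveRoot u (r + 1) := hu ▸ IsPrimitiveRoot.orderOf u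
  refine ⟨-gaussSum (quadraticCharComplex r) ZMod.stdAddChar, fun a b => ?_⟩
  rw [sSum_eq_sum_chiC_mul_zmodExp hcard hr2 hprim, sum_chiC_sub_mul_zmodExp, mul_assoc 2 a b]
  rcases eq_or_ne (a * b) 0 with h | h
  · simp [h, chiC_zero]
  · rw [gaussSum_quadraticCharComplex_mulShift _ h]
    ring

/-- Lemma 4.5 ('S-matrix'): the PSU(3) S-matrix entries `s(a·b)` are proportional to the
PSU(2) S-matrix entries `χ(ab)·(ζ^{2ab} − ζ^{−2ab})` at `ξ = ζ⁴`. -/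
theorem stmt18 (r : ℕ) [NeZero r] (hr : r.Prime) (hodd : Odd r) (h3 : r % 3 = 2)
    (F : Type*) [Field F] [Fintype F] [Algebra (ZMod r) F]
    (hcard : Fintype.card F = r ^ 2)
    (u : F) (hu : orderOf u = r + 1) :
    ∃ c : ℂ, ∀ a b : ZMod r,
      sSum r u (a * b) =
        c * chiC r (a * b) * (zmodExp r (2 * a * b) - zmodExp r (-(2 * a * b))) :=
  stmt18_general r hr hodd F hcard u hu
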